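/- Let X be a set and c : X → X → ℝ a cost function satisfying, for all x, y, z ∈ X: c(x,y) ≥ 0, c(x,y) = c(y,x), and c(x,z) ≤ c(x,y) + c(y,z). Fix an integer k ≥ 1, weighted k-tuples (x,π), (y,ρ), (z,ν), and define f((x,π),(y,ρ),σ) := (1/k) · ∑_i c(x i, y (σ i)) + Real.arccos( ∑_i √(π i · ρ (σ i)) ) for a permutation σ of Fin k. Then for all permutations σ and τ of Fin k, f((x,π),(z,ν),σ) + f((z,ν),(y,ρ),τ) ≥ f((x,π),(y,ρ), τ ∘ σ); that is, the composition of two matchings yields a matching whose cost does not exceed the sum of the two costs. -/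

import Mathlib

open scoped BigOperators

noncomputable def matchCost {X : Type*} (c : X → X → ℝ) {k : ℕ}
    (x : Fin k → X) (w₁ : Fin k → ℝ) (y : Fin k → X) (w₂ : Fin k → ℝ)
    (σ : Equiv.Perm (Fin k)) : ℝ :=
  (1 / (k : ℝ)) * ∑ i, c (x i) (y (σ i)) +
    Real.arccos (∑ i, Real.sqrt (w₁ i * w₂ (σ i)))

/-!
The transport terms compose by the triangle inequality for `c`, termwise along `σ`.
For the angular terms, a probability vector `w` is sent to the unit vector `√w` of
`EuclideanSpace`; then `∑ i, √(a i * b i)` is the inner product `⟪√a, √b⟫`, its `arccos` is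
the angle between `√a` and `√b`, and the triangle inequality for angles between vectors
gives the claim.
-/

open InnerProductGeometry

section SqrtVector

variable {ι : Type*} [Fintype ι]

noncomputable def sqrtVector (w : ι → ℝ) : EuclideanSpace ℝ ι :=
  WithLp.toLp 2 fun i => √(w i)

lemma inner_sqrtVector {a : ι → ℝ} (ha : ∀ i, 0 ≤ a i) (b : ι → ℝ) :
    inner ℝ (sqrtVector a) (sqrtVector b) = ∑ i, √(a i * b i) := by
  simp only [sqrtVector, PiLp.inner_apply, RCLike.inner_apply, conj_trivial]
  exact Finset.sum_congr rfl fun i _ => by rw [Real.sqrt_mul (ha i), mul_comm]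

lemma norm_sqrtVector {w : ι → ℝ} (hw : ∀ i, 0 ≤ w i) (hs : ∑ i, w i = 1) :
    ‖sqrtVector w‖ = 1 := by
  rw [← pow_eq_one_iff_of_nonneg (norm_nonneg _) two_ne_zero, ← real_inner_self_eq_norm_sq,
    inner_sqrtVector hw, ← hs]
  exact Finset.sum_congr rfl fun i _ => Real.sqrt_mul_self (hw i)

lemma angle_sqrtVector {a b : ι → ℝ} (ha : ∀ i, 0 ≤ a i) (has : ∑ i, a i = 1)
    (hb : ∀ i, 0 ≤ b i) (hbs : ∑ i, b i = 1) :
    angle (sqrtVector a) (sqrtVector b) = Real.arccos (∑ i, √(a i * b i)) := by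
  rw [angle, inner_sqrtVector ha, norm_sqrtVector ha has, norm_sqrtVector hb hbs, mul_one,
    div_one]

theorem arccos_sum_sqrt_mul_le {a b c : ι → ℝ} (ha : ∀ i, 0 ≤ a i) (has : ∑ i, a i = 1)
    (hb : ∀ i, 0 ≤ b i) (hbs : ∑ i, b i = 1) (hc : ∀ i, 0 ≤ c i) (hcs : ∑ i, c i = 1) :
    Real.arccos (∑ i, √(a i * c i)) ≤
      Real.arccos (∑ i, √(a i * b i)) + Real.arccos (∑ i, √(b i * c i)) := by
  rw [← angle_sqrtVector ha has hc hcs, ← angle_sqrtVector ha has hb hbs,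
    ← angle_sqrtVector hb hbs hc hcs]
  exact angle_le_angle_add_angle _ _ _

end SqrtVector

section Composition

variable {ι : Type*} [Fintype ι] (σ τ : Equiv.Perm ι)

lemma sum_cost_trans_le {X : Type*} {c : X → X → ℝ} (hc_tri : ∀ x y z, c x z ≤ c x y + c y z)
    (x y z : ι → X) :
    ∑ i, c (x i) (y (σ.trans τ i)) ≤ ∑ i, c (x i) (z (σ i)) + ∑ i, c (z i) (y (τ i)) := by
  rw [← Equiv.sum_comp σ fun j => c (z j) (y (τ j)), ← Finset.sum_add_distrib]
  exact Finset.sum_le_sum fun i _ => hc_tri _ _ _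

lemma arccos_sum_sqrt_trans_le {a b c : ι → ℝ} (ha : ∀ i, 0 ≤ a i) (has : ∑ i, a i = 1)
    (hb : ∀ i, 0 ≤ b i) (hbs : ∑ i, b i = 1) (hc : ∀ i, 0 ≤ c i) (hcs : ∑ i, c i = 1) :
    Real.arccos (∑ i, √(a i * b (σ.trans τ i))) ≤
      Real.arccos (∑ i, √(a i * c (σ i))) + Real.arccos (∑ i, √(c i * b (τ i))) := by
  rw [← Equiv.sum_comp σ fun j => √(c j * b (τ j))]
  exact arccos_sum_sqrt_mul_le ha has (fun i => hc (σ i)) ((Equiv.sum_comp σ c).trans hcs)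
    (fun i => hb _) ((Equiv.sum_comp (σ.trans τ) b).trans hbs)

end Composition

theorem matchCost_comp_le_general {X : Type*} (c : X → X → ℝ)
    (hc_tri : ∀ x y z, c x z ≤ c x y + c y z)
    (k : ℕ)
    (x y z : Fin k → X) (w₁ w₂ w₃ : Fin k → ℝ)
    (hw₁ : ∀ i, 0 ≤ w₁ i) (hw₁s : ∑ i, w₁ i = 1)
    (hw₂ : ∀ i, 0 ≤ w₂ i) (hw₂s : ∑ i, w₂ i = 1)
    (hw₃ : ∀ i, 0 ≤ w₃ i) (hw₃s : ∑ i, w₃ i = 1)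
    (σ τ : Equiv.Perm (Fin k)) :
    matchCost c x w₁ y w₂ (σ.trans τ) ≤
      matchCost c x w₁ z w₃ σ + matchCost c z w₃ y w₂ τ := by
  have htransport := mul_le_mul_of_nonneg_left (sum_cost_trans_le σ τ hc_tri x y z)
    (by positivity : (0 : ℝ) ≤ 1 / k)
  have hangle := arccos_sum_sqrt_trans_le σ τ hw₁ hw₁s hw₂ hw₂s hw₃ hw₃s
  rw [mul_add] at htransport
  unfold matchCost
  linarith

/-- **Composition of matchings** (key step in the proof of Theorem 1): if the cost
`c` is nonnegative, symmetric, and satisfies the triangle inequality, then for any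
permutations `σ, τ`, the cost of the composed matching `τ ∘ σ` between `(x,w₁)` and
`(y,w₂)` is at most the cost of `σ` from `(x,w₁)` to `(z,w₃)` plus the cost of `τ`
from `(z,w₃)` to `(y,w₂)`. -/
theorem matchCost_comp_le {X : Type*} (c : X → X → ℝ)
    (hc_nonneg : ∀ x y, 0 ≤ c x y)
    (hc_symm : ∀ x y, c x y = c y x)
    (hc_tri : ∀ x y z, c x z ≤ c x y + c y z)
    (k : ℕ) (hk : 1 ≤ k)
    (x y z : Fin k → X) (w₁ w₂ w₃ : Fin k → ℝ)
    (hw₁ : ∀ i, 0 ≤ w₁ i) (hw₁s : ∑ i, w₁ i = 1)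
    (hw₂ : ∀ i, 0 ≤ w₂ i) (hw₂s : ∑ i, w₂ i = 1)
    (hw₃ : ∀ i, 0 ≤ w₃ i) (hw₃s : ∑ i, w₃ i = 1)
    (σ τ : Equiv.Perm (Fin k)) :
    matchCost c x w₁ y w₂ (σ.trans τ) ≤
      matchCost c x w₁ z w₃ σ + matchCost c z w₃ y w₂ τ :=
  matchCost_comp_le_general c hc_tri k x y z w₁ w₂ w₃ hw₁ hw₁s hw₂ hw₂s hw₃ hw₃s σ τ
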